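/- arXiv:1602.07419 — 3 statements merged into one kernel-verified Lean document; each statement's English description precedes it below -/
import Mathlib

section
/- Let g ≥ 1 and let V = (Fin g → ZMod 2). Let (v₁, …, v_g) be a basis of V over ZMod 2 and let a₁, …, a_g ∈ ZMod 4 be values satisfying the necessary compatibility condition 2·aᵢ + ι(B(vᵢ,vᵢ)) = 0 for each i. Then there exists a ℤ₄-quadratic form q on V with q(vᵢ) = aᵢ for all i. -/
/-- The mod-2 intersection form on `Fin g → ZMod 2` (dot product). -/
def B {g : ℕ} (x y : Fin g → ZMod 2) : ZMod 2 := ∑ i, x i * y i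

/-- The doubling map `ZMod 2 → ZMod 4`, sending 0 ↦ 0 and 1 ↦ 2. -/
def ι : ZMod 2 → ZMod 4 := fun a => 2 * (a.val : ZMod 4)

/-- A ℤ₄-quadratic form on `Fin g → ZMod 2`. -/
def IsZ4Quad {g : ℕ} (q : (Fin g → ZMod 2) → ZMod 4) : Prop :=
  ∀ x y, q (x + y) = q x + q y + ι (B x y)

/-!
Let `c x` be the coordinates of `x` in the basis `v`, `ν` the `{0, 1}`-lift `ZMod 2 → ZMod 4`,
and `M` the symmetric `ZMod 4`-matrix with diagonal `a` and off-diagonal entries `ν (B (v i) (v j))`.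
Take `q x = ν (c x) ⬝ M ν (c x)`. Since `ν (u + w) = ν u + ν w + 2 ν u ν w` and `4 = 0`,
symmetry of `M` makes the carry vanish, so `q (x + y) - q x - q y = 2 ν (c x) ⬝ M ν (c y)`,
which is `ι` of the mod-2 reduction of that product. The compatibility condition says precisely that
`M` reduces mod 2 to the Gram matrix of `B` in the basis `v`, also on the diagonal.
-/

open Matrix

/-- Chosen so that `ι u = 2 * ν u` holds definitionally. -/
def ν (u : ZMod 2) : ZMod 4 := u.val

def ρ : ZMod 4 →+* ZMod 2 := ZMod.castHom (by norm_num) (ZMod 2)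

lemma ρ_ν : ∀ u, ρ (ν u) = u := by decide

lemma ν_add : ∀ u w, ν (u + w) = ν u + ν w + 2 * (ν u * ν w) := by decide

lemma two_mul_eq_ι_ρ : ∀ m, 2 * m = ι (ρ m) := by decide

lemma ρ_eq_of_two_mul_add_ι_eq_zero : ∀ m u, 2 * m + ι u = 0 → ρ m = u := by decide

lemma Matrix.IsSymm.dotProduct_mulVec_add {n R : Type*} [Fintype n] [CommRing R]
    {M : Matrix n n R} (hM : M.IsSymm) (x y : n → R) :
    (x + y) ⬝ᵥ M *ᵥ (x + y) = x ⬝ᵥ M *ᵥ x + y ⬝ᵥ M *ᵥ y + 2 * (x ⬝ᵥ M *ᵥ y) := by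
  have hyx : y ⬝ᵥ M *ᵥ x = x ⬝ᵥ M *ᵥ y := by
    rw [dotProduct_mulVec, dotProduct_comm, ← mulVec_transpose, hM.eq]
  simp only [mulVec_add, dotProduct_add, add_dotProduct, hyx]
  ring

lemma Matrix.IsSymm.dotProduct_mulVec_add_two_mul {n : Type*} [Fintype n]
    {M : Matrix n n (ZMod 4)} (hM : M.IsSymm) (x e : n → ZMod 4) :
    (x + (2 : ZMod 4) • e) ⬝ᵥ M *ᵥ (x + (2 : ZMod 4) • e) = x ⬝ᵥ M *ᵥ x := by
  have h4 : (4 : ZMod 4) = 0 := rfl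
  rw [hM.dotProduct_mulVec_add, mulVec_smul, dotProduct_smul, smul_dotProduct, dotProduct_smul]
  simp only [smul_eq_mul]
  linear_combination (e ⬝ᵥ M *ᵥ e + x ⬝ᵥ M *ᵥ e) * h4

section QuadOfMatrix

variable {n : Type*} [Fintype n]

def quadOfMatrix (M : Matrix n n (ZMod 4)) (c : n → ZMod 2) : ZMod 4 :=
  (ν ∘ c) ⬝ᵥ M *ᵥ (ν ∘ c)

lemma quadOfMatrix_add {M : Matrix n n (ZMod 4)} (hM : M.IsSymm) (c d : n → ZMod 2) :
    quadOfMatrix M (c + d) = quadOfMatrix M c + quadOfMatrix M d + ι (c ⬝ᵥ M.map ρ *ᵥ d) := by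
  have hlift : ν ∘ (c + d) = ν ∘ c + ν ∘ d + (2 : ZMod 4) • (ν ∘ c * ν ∘ d) := by
    funext i
    simp only [Function.comp_apply, Pi.add_apply, Pi.smul_apply, Pi.mul_apply, smul_eq_mul]
    exact ν_add (c i) (d i)
  have hρ : ∀ c : n → ZMod 2, ρ ∘ (ν ∘ c) = c := fun c => funext fun i => ρ_ν (c i)
  unfold quadOfMatrix
  rw [hlift, hM.dotProduct_mulVec_add_two_mul, hM.dotProduct_mulVec_add, two_mul_eq_ι_ρ,
    RingHom.map_dotProduct]
  have hMd : ρ ∘ (M *ᵥ ν ∘ d) = M.map ρ *ᵥ d :=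
    funext fun i => by rw [Function.comp_apply, RingHom.map_mulVec, hρ]
  rw [hρ c, hMd]

lemma quadOfMatrix_single [DecidableEq n] (M : Matrix n n (ZMod 4)) (i : n) :
    quadOfMatrix M (Pi.single i 1) = M i i := by
  have : ν ∘ Pi.single i 1 = Pi.single i 1 := by
    funext j; by_cases h : j = i <;> simp [h] <;> rfl
  simp [quadOfMatrix, this]

end QuadOfMatrix

lemma vecMul_dotProduct_vecMul {m n R : Type*} [Fintype m] [Fintype n] [CommSemiring R]
    (V : Matrix m n R) (c d : m → R) : (c ᵥ* V) ⬝ᵥ (d ᵥ* V) = c ⬝ᵥ (V * Vᵀ) *ᵥ d := by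
  rw [← dotProduct_mulVec, ← mulVec_mulVec, mulVec_transpose]

lemma Module.Basis.equivFun_vecMul_of {ι' n R : Type*} [Fintype ι'] [Fintype n] [CommSemiring R]
    (v : Module.Basis ι' R (n → R)) (x : n → R) : v.equivFun x ᵥ* Matrix.of v = x := by
  rw [vecMul_eq_sum]; exact v.sum_equivFun x

theorem stmt_3_general (g : ℕ)
    (v : Module.Basis (Fin g) (ZMod 2) (Fin g → ZMod 2))
    (a : Fin g → ZMod 4)
    (ha : ∀ i, 2 * a i + ι (B (v i) (v i)) = 0) :
    ∃ q : (Fin g → ZMod 2) → ZMod 4, IsZ4Quad q ∧ ∀ i, q (v i) = a i := by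
  set G := Matrix.of v * (Matrix.of v)ᵀ
  have hB : ∀ x y, B x y = v.equivFun x ⬝ᵥ G *ᵥ v.equivFun y := fun x y => by
    rw [← vecMul_dotProduct_vecMul, v.equivFun_vecMul_of, v.equivFun_vecMul_of]; rfl
  let M : Matrix (Fin g) (Fin g) (ZMod 4) := Matrix.of fun i j => if i = j then a i else ν (G i j)
  have hM : M.IsSymm := by
    ext i j
    by_cases h : i = j
    · subst h; rfl
    · simp only [M, transpose_apply, of_apply, if_neg h, if_neg (Ne.symm h)]
      exact congrArg ν ((isSymm_mul_transpose_self (Matrix.of v)).apply i j)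
  have hMρ : M.map ρ = G := by
    ext i j
    by_cases h : i = j
    · subst h
      simp only [M, map_apply, of_apply, if_pos]
      exact ρ_eq_of_two_mul_add_ι_eq_zero _ _ (ha i)
    · simp only [M, map_apply, of_apply, if_neg h, ρ_ν]
  have hsingle : ∀ i, v.equivFun (v i) = Pi.single i 1 := fun i => by
    funext j; simp [Pi.single_apply, eq_comm]
  refine ⟨fun x => quadOfMatrix M (v.equivFun x), fun x y => ?_, fun i => ?_⟩
  · simp only [map_add, quadOfMatrix_add hM, hMρ, hB]
  · simp only [hsingle, quadOfMatrix_single, M, of_apply, if_pos]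

theorem stmt_3 (g : ℕ) (hg : 1 ≤ g)
    (v : Module.Basis (Fin g) (ZMod 2) (Fin g → ZMod 2))
    (a : Fin g → ZMod 4)
    (ha : ∀ i, 2 * a i + ι (B (v i) (v i)) = 0) :
    ∃ q : (Fin g → ZMod 2) → ZMod 4, IsZ4Quad q ∧ ∀ i, q (v i) = a i :=
  stmt_3_general g v a ha
end

section
/- Let g ≥ 4 and let V = (Fin g → ZMod 2). For every ℤ₄-quadratic form q on V there exists a nonzero element x ∈ V with w₁(x) = 0 and q(x) = 0. -/
/-- The first Stiefel–Whitney class `w₁(x) = ∑ i, x i`. -/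
def w₁ {g : ℕ} (x : Fin g → ZMod 2) : ZMod 2 := ∑ i, x i

/-- Standard basis vector. -/
def ev {g : ℕ} (i : Fin g) : Fin g → ZMod 2 := fun k => if k = i then 1 else 0

lemma B_ev {g : ℕ} (i j : Fin g) : B (ev i) (ev j) = if i = j then 1 else 0 := by
  classical
  rcases eq_or_ne i j with h | h
  · subst h; simp [B, ev, Finset.sum_ite_eq']
  · simp [B, ev, ite_and, Finset.sum_ite_eq', h, h.symm]

lemma w₁_ev {g : ℕ} (i : Fin g) : w₁ (ev i) = 1 := by
  classical
  simp [w₁, ev, Finset.sum_ite_eq']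

lemma w₁_add {g : ℕ} (x y : Fin g → ZMod 2) : w₁ (x + y) = w₁ x + w₁ y := by
  simp [w₁, Finset.sum_add_distrib]

lemma B_add_left {g : ℕ} (x y z : Fin g → ZMod 2) :
    B (x + y) z = B x z + B y z := by
  simp [B, add_mul, Finset.sum_add_distrib]

lemma B_add_right {g : ℕ} (x y z : Fin g → ZMod 2) :
    B x (y + z) = B x y + B x z := by
  simp [B, mul_add, Finset.sum_add_distrib]

theorem stmt_4 (g : ℕ) (hg : 4 ≤ g) (q : (Fin g → ZMod 2) → ZMod 4)
    (hq : IsZ4Quad q) :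
    ∃ x : Fin g → ZMod 2, x ≠ 0 ∧ w₁ x = 0 ∧ q x = 0 := by
  classical
  -- q 0 = 0
  have hq0 : q 0 = 0 := by
    have h := hq 0 0
    have hB : B (0 : Fin g → ZMod 2) 0 = 0 := by simp [B]
    rw [add_zero, hB, show ι 0 = 0 by decide, add_zero] at h
    have : q 0 + 0 = q 0 + q 0 := by rw [add_zero]; exact h
    exact (add_left_cancel this).symm
  -- each q (ev i) is odd
  have hodd : ∀ i : Fin g, q (ev i) = 1 ∨ q (ev i) = 3 := by
    intro i
    have h := hq (ev i) (ev i)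
    have hee : ev i + ev i = 0 := by
      funext k; simp [ev]; split <;> decide
    rw [hee, hq0, B_ev, if_pos rfl, show ι 1 = 2 by decide] at h
    have h2 := h.symm
    revert h2
    generalize q (ev i) = a
    revert a; decide
  set i0 : Fin g := ⟨0, by omega⟩
  set i1 : Fin g := ⟨1, by omega⟩
  set i2 : Fin g := ⟨2, by omega⟩
  set i3 : Fin g := ⟨3, by omega⟩
  have h01 : i0 ≠ i1 := by simp [i0, i1, Fin.ext_iff]
  have h02 : i0 ≠ i2 := by simp [i0, i2, Fin.ext_iff]
  have h03 : i0 ≠ i3 := by simp [i0, i3, Fin.ext_iff]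
  have h12 : i1 ≠ i2 := by simp [i1, i2, Fin.ext_iff]
  have h13 : i1 ≠ i3 := by simp [i1, i3, Fin.ext_iff]
  have h23 : i2 ≠ i3 := by simp [i2, i3, Fin.ext_iff]
  -- pair construction
  have pair : ∀ i j : Fin g, i ≠ j → q (ev i) + q (ev j) = 0 →
      ∃ x : Fin g → ZMod 2, x ≠ 0 ∧ w₁ x = 0 ∧ q x = 0 := by
    intro i j hij hsum
    refine ⟨ev i + ev j, ?_, ?_, ?_⟩
    · intro h
      have := congrFun h j
      simp [ev, hij.symm] at this
    · rw [w₁_add, w₁_ev, w₁_ev]; decide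
    · rw [hq (ev i) (ev j), B_ev, if_neg hij, show ι 0 = 0 by decide, add_zero, hsum]
  -- quadruple construction
  have quad : q (ev i0) + q (ev i1) + q (ev i2) + q (ev i3) = 0 →
      ∃ x : Fin g → ZMod 2, x ≠ 0 ∧ w₁ x = 0 ∧ q x = 0 := by
    intro hsum
    refine ⟨ev i0 + ev i1 + ev i2 + ev i3, ?_, ?_, ?_⟩
    · intro h
      have := congrFun h i0
      simp [ev, h01, h02, h03] at this
    · rw [w₁_add, w₁_add, w₁_add, w₁_ev, w₁_ev, w₁_ev, w₁_ev]; decide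
    · have e01 := hq (ev i0) (ev i1)
      have e012 := hq (ev i0 + ev i1) (ev i2)
      have e0123 := hq (ev i0 + ev i1 + ev i2) (ev i3)
      rw [B_ev, if_neg h01, show ι 0 = 0 by decide, add_zero] at e01
      rw [B_add_left, B_ev, B_ev, if_neg h02, if_neg h12] at e012
      rw [show ((0:ZMod 2) + 0) = 0 by decide, show ι 0 = 0 by decide,
        add_zero] at e012
      rw [B_add_left, B_add_left, B_ev, B_ev, B_ev, if_neg h03, if_neg h13,
        if_neg h23] at e0123
      rw [show ((0:ZMod 2) + 0 + 0) = 0 by decide, show ι 0 = 0 by decide,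
        add_zero] at e0123
      rw [e0123, e012, e01, hsum]
  rcases hodd i0 with h0 | h0 <;> rcases hodd i1 with h1 | h1 <;>
    rcases hodd i2 with h2 | h2 <;> rcases hodd i3 with h3 | h3 <;>
    first
      | exact pair i0 i1 h01 (by rw [h0, h1]; decide)
      | exact pair i0 i2 h02 (by rw [h0, h2]; decide)
      | exact pair i0 i3 h03 (by rw [h0, h3]; decide)
      | exact quad (by rw [h0, h1, h2, h3]; decide)
end

section
/- Let g ≥ 4 and let V = (Fin g → ZMod 2). For every ℤ₄-quadratic form q on V there exist a nonzero x ∈ V with w₁(x) = 0 and an element y ∈ V such that q(τ_x(y)) ≠ q(y); that is, no ℤ₄-quadratic form on V is preserved by all transvections τ_x with x a nonzero element of the kernel of w₁. -/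
/-- The transvection associated to `c` : `τ_c(x) = x + B(x,c) • c`. -/
def τ {g : ℕ} (c : Fin g → ZMod 2) : (Fin g → ZMod 2) → (Fin g → ZMod 2) :=
  fun x => x + B x c • c

lemma B_single {g : ℕ} (x : Fin g → ZMod 2) (j : Fin g) :
    B x (Pi.single j 1) = x j := by
  simp [B, Pi.single_apply, mul_ite, Finset.sum_ite_eq']

lemma w₁_single {g : ℕ} (j : Fin g) : w₁ (Pi.single j (1 : ZMod 2)) = 1 := by
  simp [w₁, Pi.single_apply, Finset.sum_ite_eq']

theorem stmt_6 (g : ℕ) (hg : 4 ≤ g) (q : (Fin g → ZMod 2) → ZMod 4)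
    (hq : IsZ4Quad q) :
    ∃ x : Fin g → ZMod 2, x ≠ 0 ∧ w₁ x = 0 ∧ ∃ y : Fin g → ZMod 2,
      q (τ x y) ≠ q y := by
  set i0 : Fin g := ⟨0, by omega⟩
  set i1 : Fin g := ⟨1, by omega⟩
  set i2 : Fin g := ⟨2, by omega⟩
  set i3 : Fin g := ⟨3, by omega⟩
  set s0 : Fin g → ZMod 2 := Pi.single i0 1 with hs0
  set s1 : Fin g → ZMod 2 := Pi.single i1 1 with hs1
  set s2 : Fin g → ZMod 2 := Pi.single i2 1 with hs2
  set s3 : Fin g → ZMod 2 := Pi.single i3 1 with hs3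
  have hne01 : i0 ≠ i1 := by simp [i0, i1, Fin.ext_iff]
  have hne : ∀ i j : Fin g, i ≠ j → (Pi.single i 1 : Fin g → ZMod 2) j = 0 := by
    intro i j h; simp [Pi.single_apply, h.symm]
  have hself : ∀ i : Fin g, (Pi.single i 1 : Fin g → ZMod 2) i = 1 := by
    intro i; simp
  set a : Fin g → ZMod 2 := s0 + s1 with ha
  set b : Fin g → ZMod 2 := s2 + s3 with hb
  have hw₁a : w₁ a = 0 := by
    rw [ha, w₁_add, hs0, hs1, w₁_single, w₁_single]; decide
  have hw₁b : w₁ b = 0 := by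
    rw [hb, w₁_add, hs2, hs3, w₁_single, w₁_single]; decide
  have hane : a ≠ 0 := by
    intro h
    have := congrFun h i0
    rw [ha] at this
    simp only [Pi.add_apply, hs0, hs1, hself i0, hne i1 i0 (by simp [i0,i1,Fin.ext_iff]),
      Pi.zero_apply] at this
    simp at this
  have hbne : b ≠ 0 := by
    intro h
    have := congrFun h i2
    rw [hb] at this
    simp only [Pi.add_apply, hs2, hs3, hself i2, hne i3 i2 (by simp [i2,i3,Fin.ext_iff]),
      Pi.zero_apply] at this
    simp at this
  have habne : a + b ≠ 0 := by
    intro h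
    have := congrFun h i0
    rw [ha, hb] at this
    simp only [Pi.add_apply, hs0, hs1, hs2, hs3, hself i0,
      hne i1 i0 (by simp [i0,i1,Fin.ext_iff]), hne i2 i0 (by simp [i0,i2,Fin.ext_iff]),
      hne i3 i0 (by simp [i0,i3,Fin.ext_iff]), Pi.zero_apply] at this
    simp at this
  -- B values
  have hBab : B a b = 0 := by
    rw [hb, B_add_right, hs2, hs3, B_single, B_single, ha]
    simp only [Pi.add_apply, hs0, hs1,
      hne i0 i2 (by simp [i0,i2,Fin.ext_iff]), hne i1 i2 (by simp [i1,i2,Fin.ext_iff]),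
      hne i0 i3 (by simp [i0,i3,Fin.ext_iff]), hne i1 i3 (by simp [i1,i3,Fin.ext_iff])]
    decide
  have hBs0a : B s0 a = 1 := by
    rw [ha, B_add_right, hs0, hs1, B_single, B_single]
    rw [hself i0, hne i0 i1 hne01]; decide
  have hBs2b : B s2 b = 1 := by
    rw [hb, B_add_right, hs2, hs3, B_single, B_single]
    rw [hself i2, hne i2 i3 (by simp [i2,i3,Fin.ext_iff])]; decide
  have hBs0ab : B s0 (a + b) = 1 := by
    rw [B_add_right, hBs0a, hb, B_add_right, hs0, hs2, hs3, B_single, B_single]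
    rw [hne i0 i2 (by simp [i0,i2,Fin.ext_iff]), hne i0 i3 (by simp [i0,i3,Fin.ext_iff])]
    decide
  -- key lemma: if B y x = 1 and q x ≠ 2, then q (τ x y) ≠ q y
  have key : ∀ x y : Fin g → ZMod 2, B y x = 1 → q x ≠ 2 → q (τ x y) ≠ q y := by
    intro x y hB hx h
    apply hx
    have hτ : τ x y = y + x := by
      simp [τ, hB]
    rw [hτ, hq y x] at h
    have hι : ι (B y x) = 2 := by rw [hB]; decide
    rw [hι] at h
    have h2 : q x + 2 = 0 := by linear_combination h
    have : q x = -2 := by linear_combination h2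
    rw [this]; decide
  by_cases hqa : q a = 2
  · by_cases hqb : q b = 2
    · refine ⟨a + b, habne, by rw [w₁_add, hw₁a, hw₁b]; decide, s0, ?_⟩
      apply key _ _ hBs0ab
      rw [hq a b, hqa, hqb, hBab]; decide
    · exact ⟨b, hbne, hw₁b, s2, key _ _ hBs2b hqb⟩
  · exact ⟨a, hane, hw₁a, s0, key _ _ hBs0a hqa⟩
end
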